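/- Let m ≥ 0 and let f = ∏_i (x − a_i)^{b_i} with a_1,…,a_r ∈ ℂ pairwise distinct and b_1,…,b_r ∈ ℤ. If F ∈ Q_m(f), then the one-variable polynomial ∏_{i=1}^r (x − a_i)^{d_m(b_i)} divides F(x,x) in ℂ[x]. -/

import Mathlib

open MvPolynomial

/-- For `f = ∏ i (x − a_i)^{b_i}`, the numerator `g(x) = ∏_{i : b_i > 0} (x − a_i)^{b_i}`,
as a polynomial in the variable `X v` of `ℂ[x,y]`. -/
noncomputable def numerAt {r : ℕ} (a : Fin r → ℂ) (b : Fin r → ℤ) (v : Fin 2) :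
    MvPolynomial (Fin 2) ℂ :=
  ∏ i ∈ Finset.univ.filter (fun i => 0 < b i), (X v - MvPolynomial.C (a i)) ^ (b i).toNat

/-- For `f = ∏ i (x − a_i)^{b_i}`, the denominator `h(x) = ∏_{i : b_i < 0} (x − a_i)^{−b_i}`,
as a polynomial in the variable `X v` of `ℂ[x,y]`. -/
noncomputable def denomAt {r : ℕ} (a : Fin r → ℂ) (b : Fin r → ℤ) (v : Fin 2) :
    MvPolynomial (Fin 2) ℂ :=
  ∏ i ∈ Finset.univ.filter (fun i => b i < 0), (X v - MvPolynomial.C (a i)) ^ (-(b i)).toNat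

/-- `F ∈ Q_m(f)` for `f = g/h = ∏ i (x − a_i)^{b_i}`: the divisibility
`(x − y)^{2m+1} ∣ g(x)h(y)F(x,y) − g(y)h(x)F(y,x)` holds in `ℂ[x,y]`. -/
def MemQalg {r : ℕ} (a : Fin r → ℂ) (b : Fin r → ℤ) (m : ℕ)
    (F : MvPolynomial (Fin 2) ℂ) : Prop :=
  (X 0 - X 1) ^ (2 * m + 1) ∣
    numerAt a b 0 * denomAt a b 1 * F
      - numerAt a b 1 * denomAt a b 0 * rename (Equiv.swap (0 : Fin 2) 1) F

/-- The restriction of `F ∈ ℂ[x,y]` to the diagonal, i.e., the one-variable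
polynomial `F(x,x)`. -/
noncomputable def diag (F : MvPolynomial (Fin 2) ℂ) : Polynomial ℂ :=
  MvPolynomial.aeval (fun _ : Fin 2 => (Polynomial.X : Polynomial ℂ)) F


/-- A nonzero polynomial divisible by `(1 - X)^k` has more than `k` nonzero coefficients. -/
lemma lt_card_support_of_pow_dvd :
    ∀ (k : ℕ) (p : Polynomial ℂ), p ≠ 0 → (1 - Polynomial.X) ^ k ∣ p → k < p.support.card := by
  intro k
  induction k with
  | zero =>
    intro p hp _
    simpa [Finset.card_pos, Polynomial.support_nonempty] using hp
  | succ k ih =>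
    intro p hp hd
    have h1 : p.eval 1 = 0 := by
      obtain ⟨q, rfl⟩ := hd
      simp
    set e := p.natTrailingDegree with he
    set r := Polynomial.X * Polynomial.derivative p - Polynomial.C (e : ℂ) * p with hr
    have hcoeff : ∀ i : ℕ, r.coeff i = ((i : ℂ) - e) * p.coeff i := by
      intro i
      cases i with
      | zero => simp [hr, Polynomial.mul_coeff_zero]
      | succ i =>
        simp [hr, Polynomial.coeff_X_mul, Polynomial.coeff_derivative]
        ring
    have hsupp : r.support = p.support.erase e := by
      ext i
      simp only [Polynomial.mem_support_iff, Finset.mem_erase, hcoeff, mul_ne_zero_iff,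
        sub_ne_zero, Ne]
      constructor
      · rintro ⟨h1, h2⟩; exact ⟨fun h => h1 (by exact_mod_cast congrArg (Nat.cast : ℕ → ℂ) h), h2⟩
      · rintro ⟨h1, h2⟩; exact ⟨fun h => h1 (Nat.cast_inj.mp h), h2⟩
    have hpe : e ∈ p.support := by
      rw [Polynomial.mem_support_iff]
      exact Polynomial.trailingCoeff_nonzero_iff_nonzero.mpr hp
    have hr0 : r ≠ 0 := by
      intro h0
      -- then p is a monomial, contradicting eval 1 = 0
      have hmono : ∀ i, i ≠ e → p.coeff i = 0 := by
        intro i hie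
        have := hcoeff i
        rw [h0] at this
        have : ((i : ℂ) - e) * p.coeff i = 0 := by simpa using this.symm
        rcases mul_eq_zero.1 this with h | h
        · exact absurd (by exact_mod_cast sub_eq_zero.1 h) hie
        · exact h
      have : p = Polynomial.C (p.coeff e) * Polynomial.X ^ e := by
        ext i
        by_cases hie : i = e
        · subst hie; simp
        · simp [Polynomial.coeff_C_mul, Polynomial.coeff_X_pow, hie, hmono i hie]
      rw [this] at h1
      simp at h1
      exact Polynomial.mem_support_iff.1 hpe h1
    have hdvd : (1 - Polynomial.X) ^ k ∣ r := by
      obtain ⟨q, rfl⟩ := hd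
      refine ⟨Polynomial.X * (((k : Polynomial ℂ) + 1) * (-1) * q)
        + (1 - Polynomial.X) * (Polynomial.X * Polynomial.derivative q - Polynomial.C (e : ℂ) * q), ?_⟩
      rw [hr]
      have hdq : Polynomial.derivative ((1 - Polynomial.X) ^ (k + 1) * q)
          = (k+1 : ℕ) • (1 - Polynomial.X) ^ k * (-1) * q + (1 - Polynomial.X) ^ (k+1) * Polynomial.derivative q := by
        rw [Polynomial.derivative_mul, Polynomial.derivative_pow]
        simp [mul_assoc, mul_comm, mul_left_comm]
      rw [hdq, nsmul_eq_mul]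
      push_cast
      ring
    have := ih r hr0 hdvd
    rw [hsupp, Finset.card_erase_of_mem hpe] at this
    omega

lemma core_one_var (m β n : ℕ) (hm : n - β < m) (hβ : n < 2 * β) (p : Polynomial ℂ)
    (hdeg : ∀ i, n < i + β → p.coeff i = 0)
    (hdvd : (1 - Polynomial.X) ^ (2 * m + 1) ∣ p - Polynomial.reflect n p) : p = 0 := by
  set N := n - β with hN
  set σ := p - Polynomial.reflect n p with hσ
  have hsub : σ.support ⊆ Finset.range (N + 1) ∪ (Finset.range (N + 1)).image (Polynomial.revAt n) := by
    intro i hi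
    rw [Polynomial.mem_support_iff] at hi
    have : p.coeff i ≠ 0 ∨ (Polynomial.reflect n p).coeff i ≠ 0 := by
      by_contra h
      push_neg at h
      apply hi
      rw [hσ, Polynomial.coeff_sub, h.1, h.2, sub_zero]
    rcases this with h | h
    · have : ¬ (n < i + β) := fun hc => h (hdeg i hc)
      exact Finset.mem_union_left _ (Finset.mem_range.2 (by omega))
    · rw [Polynomial.coeff_reflect] at h
      have h1 : ¬ (n < Polynomial.revAt n i + β) := fun hc => h (hdeg _ hc)
      refine Finset.mem_union_right _ (Finset.mem_image.2 ⟨Polynomial.revAt n i, Finset.mem_range.2 (by omega), ?_⟩)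
      exact Polynomial.revAt_invol
  have hcard : σ.support.card ≤ 2 * m := by
    calc σ.support.card ≤ _ := Finset.card_le_card hsub
    _ ≤ (Finset.range (N+1)).card + ((Finset.range (N + 1)).image (Polynomial.revAt n)).card :=
        Finset.card_union_le _ _
    _ ≤ (N + 1) + (N + 1) := by
        gcongr
        · simp
        · exact le_trans (Finset.card_image_le) (by simp)
    _ ≤ 2 * m := by omega
  have hσ0 : σ = 0 := by
    by_contra h0
    have := lt_card_support_of_pow_dvd (2 * m + 1) σ h0 hdvd
    omega
  have hpr : p = Polynomial.reflect n p := by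
    have := sub_eq_zero.1 hσ0
    exact this
  ext i
  rcases lt_or_ge n (i + β) with hc | hc
  · simp [hdeg i hc]
  · have hiN : i ≤ N := by omega
    have hin : i ≤ n := by omega
    rw [hpr, Polynomial.coeff_reflect, Polynomial.revAt_le hin]
    simp [hdeg (n - i) (by omega)]

noncomputable def Psi : MvPolynomial (Fin 2) ℂ →ₐ[ℂ] Polynomial (Polynomial ℂ) :=
  MvPolynomial.aeval (fun v : Fin 2 => if v = 0 then (Polynomial.X : Polynomial (Polynomial ℂ))
    else Polynomial.C Polynomial.X * Polynomial.X)

lemma monomial_eq_two (u : Fin 2 →₀ ℕ) (c : ℂ) :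
    monomial u c = MvPolynomial.C c * X 0 ^ (u 0) * X 1 ^ (u 1) := by
  rw [MvPolynomial.monomial_eq, Finsupp.prod_pow, Fin.prod_univ_two, mul_assoc]

lemma Psi_monomial (u : Fin 2 →₀ ℕ) (c : ℂ) :
    Psi (monomial u c) =
      Polynomial.C (Polynomial.C c * Polynomial.X ^ (u 1)) * Polynomial.X ^ (u 0 + u 1) := by
  rw [monomial_eq_two]
  simp only [Psi, map_mul, map_pow, MvPolynomial.aeval_C, MvPolynomial.aeval_X]
  simp only [if_pos rfl, if_neg (by decide : ¬ (1 : Fin 2) = 0), if_true]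
  rw [mul_pow, ← Polynomial.C_pow]
  simp only [Polynomial.algebraMap_apply, Algebra.algebraMap_self, RingHom.id_apply, map_mul,
    Polynomial.C_mul, pow_add, if_true]
  ring

lemma Psi_rename_monomial (u : Fin 2 →₀ ℕ) (c : ℂ) :
    Psi (rename (Equiv.swap (0 : Fin 2) 1) (monomial u c)) =
      Polynomial.C (Polynomial.C c * Polynomial.X ^ (u 0)) * Polynomial.X ^ (u 0 + u 1) := by
  rw [monomial_eq_two]
  simp only [map_mul, map_pow, MvPolynomial.rename_C, MvPolynomial.rename_X]
  rw [Equiv.swap_apply_left, Equiv.swap_apply_right]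
  simp only [Psi, map_mul, map_pow, MvPolynomial.aeval_C, MvPolynomial.aeval_X]
  simp only [if_pos rfl, if_neg (by decide : ¬ (1 : Fin 2) = 0), if_true]
  rw [mul_pow, ← Polynomial.C_pow]
  simp only [Polynomial.algebraMap_apply, Algebra.algebraMap_self, RingHom.id_apply, map_mul,
    Polynomial.C_mul, pow_add, if_true]
  ring

lemma coeff_coeff_Psi (A : MvPolynomial (Fin 2) ℂ) (n i : ℕ) (h : n < i) :
    ((Psi A).coeff n).coeff i = 0 := by
  conv_lhs => rw [A.as_sum]
  rw [map_sum, Polynomial.finset_sum_coeff, Polynomial.finset_sum_coeff]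
  apply Finset.sum_eq_zero
  intro u _
  rw [Psi_monomial, Polynomial.coeff_C_mul, Polynomial.coeff_X_pow]
  by_cases hn : n = u 0 + u 1
  · have h1 : ¬ i = u 1 := by omega
    subst hn
    simp [Polynomial.coeff_C_mul, Polynomial.coeff_X_pow, h1]
  · simp [hn]

lemma reflect_sum {ι : Type*} (n : ℕ) (s : Finset ι) (f : ι → Polynomial ℂ) :
    Polynomial.reflect n (∑ u ∈ s, f u) = ∑ u ∈ s, Polynomial.reflect n (f u) :=
  map_sum (AddMonoidHom.mk' (Polynomial.reflect n) (fun a b => Polynomial.reflect_add a b n)) f s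

lemma coeff_Psi_swap (A : MvPolynomial (Fin 2) ℂ) (n : ℕ) :
    (Psi (rename (Equiv.swap (0 : Fin 2) 1) A)).coeff n
      = Polynomial.reflect n ((Psi A).coeff n) := by
  conv_lhs => rw [A.as_sum]
  conv_rhs => rw [A.as_sum]
  rw [map_sum, map_sum, map_sum, Polynomial.finset_sum_coeff, Polynomial.finset_sum_coeff,
    reflect_sum]
  apply Finset.sum_congr rfl
  intro u _
  simp only [Psi_monomial, Psi_rename_monomial, Polynomial.coeff_C_mul, Polynomial.coeff_X_pow]
  by_cases hn : n = u 0 + u 1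
  · rw [if_pos hn, mul_one, mul_one, Polynomial.reflect_C_mul_X_pow,
      Polynomial.revAt_le (by omega : u 1 ≤ n)]
    congr 2
    omega
  · simp [hn]

lemma diag_coeff_eq (A : MvPolynomial (Fin 2) ℂ) (n : ℕ) :
    (diag A).coeff n = ((Psi A).coeff n).eval 1 := by
  conv_lhs => rw [A.as_sum]
  conv_rhs => rw [A.as_sum]
  rw [diag, map_sum, map_sum, Polynomial.finset_sum_coeff, Polynomial.finset_sum_coeff]
  rw [Polynomial.eval_finset_sum]
  apply Finset.sum_congr rfl
  intro u _
  rw [Psi_monomial, Polynomial.coeff_C_mul, Polynomial.coeff_X_pow, monomial_eq_two]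
  simp only [map_mul, map_pow, MvPolynomial.aeval_C, MvPolynomial.aeval_X]
  rw [Polynomial.algebraMap_apply, Algebra.algebraMap_self, RingHom.id_apply, mul_assoc,
    ← pow_add, Polynomial.coeff_C_mul, Polynomial.coeff_X_pow]
  by_cases hn : n = u 0 + u 1
  · simp [hn]
  · simp [hn]

lemma Psi_X0 : Psi (X 0) = Polynomial.X := by simp [Psi]

lemma Psi_X1 : Psi (X 1) = Polynomial.C Polynomial.X * Polynomial.X := by
  simp [Psi]

lemma keyA0 (m β : ℕ) (A : MvPolynomial (Fin 2) ℂ)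
    (hx : (X 0 : MvPolynomial (Fin 2) ℂ) ^ β ∣ A)
    (hU : (X 0 - X 1 : MvPolynomial (Fin 2) ℂ) ^ (2 * m + 1) ∣
      A - rename (Equiv.swap (0 : Fin 2) 1) A) :
    (Polynomial.X : Polynomial ℂ) ^ (β + min m β) ∣ diag A := by
  rw [Polynomial.X_pow_dvd_iff]
  intro n hn
  -- inner-coefficient vanishing.
  obtain ⟨B, hB⟩ := hx
  have hW : Psi A = Polynomial.X ^ β * Psi B := by rw [hB, map_mul, map_pow, Psi_X0]
  have hXdvd : (Polynomial.X : Polynomial (Polynomial ℂ)) ^ β ∣ Psi A := ⟨Psi B, hW⟩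
  have hdeg : ∀ i, n < i + β → ((Psi A).coeff n).coeff i = 0 := by
    intro i hi
    rcases lt_or_ge n β with hnβ | hnβ
    · rw [Polynomial.X_pow_dvd_iff] at hXdvd
      rw [hXdvd n hnβ, Polynomial.coeff_zero]
    · have hn' : n = (n - β) + β := by omega
      rw [hW, hn', Polynomial.coeff_X_pow_mul]
      exact coeff_coeff_Psi B (n - β) i (by omega)
  have hdvd : (1 - Polynomial.X : Polynomial ℂ) ^ (2 * m + 1) ∣
      (Psi A).coeff n - Polynomial.reflect n ((Psi A).coeff n) := by
    obtain ⟨T, hT⟩ := hU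
    have h1 : Psi (X 0 - X 1 : MvPolynomial (Fin 2) ℂ)
        = Polynomial.C (1 - Polynomial.X) * Polynomial.X := by
      rw [map_sub, Psi_X0, Psi_X1, map_sub, Polynomial.C_1]
      ring
    refine ⟨(Polynomial.X ^ (2*m+1) * Psi T).coeff n, ?_⟩
    rw [← coeff_Psi_swap, ← Polynomial.coeff_sub, ← map_sub, hT, map_mul, map_pow, h1,
      mul_pow, ← Polynomial.C_pow, mul_assoc, Polynomial.coeff_C_mul]
  rcases lt_or_ge n β with hnβ | hnβ
  · have hp : (Psi A).coeff n = 0 := by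
      ext i
      rw [hdeg i (by omega), Polynomial.coeff_zero]
    rw [diag_coeff_eq, hp]
    simp
  · have hmin : 1 ≤ min m β := by omega
    have hp : (Psi A).coeff n = 0 :=
      core_one_var m β n (by omega) (by omega) _ hdeg hdvd
    rw [diag_coeff_eq, hp]
    simp

/-- Translated version: vanishing at `x = aa`. -/
lemma keyA (m β : ℕ) (aa : ℂ) (A : MvPolynomial (Fin 2) ℂ)
    (hx : (X 0 - MvPolynomial.C aa : MvPolynomial (Fin 2) ℂ) ^ β ∣ A)
    (hU : (X 0 - X 1 : MvPolynomial (Fin 2) ℂ) ^ (2 * m + 1) ∣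
      A - rename (Equiv.swap (0 : Fin 2) 1) A) :
    (Polynomial.X - Polynomial.C aa) ^ (β + min m β) ∣ diag A := by
  set ψ : MvPolynomial (Fin 2) ℂ →ₐ[ℂ] MvPolynomial (Fin 2) ℂ :=
    MvPolynomial.aeval (fun v : Fin 2 => X v + MvPolynomial.C aa) with hψ
  have hψX : ∀ v, ψ (X v) = X v + MvPolynomial.C aa := by intro v; simp [hψ]
  have hψC : ∀ c : ℂ, ψ (MvPolynomial.C c) = MvPolynomial.C c := by
    intro c; simp [hψ, MvPolynomial.algebraMap_eq]
  have hx' : (X 0 : MvPolynomial (Fin 2) ℂ) ^ β ∣ ψ A := by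
    obtain ⟨B, hB⟩ := hx
    refine ⟨ψ B, ?_⟩
    rw [hB, map_mul, map_pow, map_sub, hψX, hψC]
    ring_nf
  have hcomm : ∀ (P : MvPolynomial (Fin 2) ℂ),
      rename (Equiv.swap (0 : Fin 2) 1) (ψ P) = ψ (rename (Equiv.swap (0 : Fin 2) 1) P) := by
    intro P
    rw [hψ, MvPolynomial.aeval_rename]
    have : (rename (Equiv.swap (0 : Fin 2) 1)).comp
        (MvPolynomial.aeval (fun v : Fin 2 => X v + MvPolynomial.C aa))
        = MvPolynomial.aeval ((fun v : Fin 2 => X v + MvPolynomial.C aa) ∘ (Equiv.swap (0 : Fin 2) 1)) := by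
      rw [MvPolynomial.comp_aeval]
      congr 1
      funext v
      simp [MvPolynomial.rename_C]
    exact congrFun (congrArg DFunLike.coe this) P
  have hU' : (X 0 - X 1 : MvPolynomial (Fin 2) ℂ) ^ (2 * m + 1) ∣
      ψ A - rename (Equiv.swap (0 : Fin 2) 1) (ψ A) := by
    obtain ⟨T, hT⟩ := hU
    refine ⟨ψ T, ?_⟩
    rw [hcomm, ← map_sub, hT, map_mul, map_pow, map_sub, hψX, hψX]
    ring_nf
  have hdiag : (Polynomial.aeval (Polynomial.X + Polynomial.C aa) : Polynomial ℂ →ₐ[ℂ] Polynomial ℂ) (diag A)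
      = diag (ψ A) := by
    rw [diag, diag, hψ]
    have h1 : (Polynomial.aeval (Polynomial.X + Polynomial.C aa) : Polynomial ℂ →ₐ[ℂ] Polynomial ℂ).comp
        (MvPolynomial.aeval (fun _ : Fin 2 => (Polynomial.X : Polynomial ℂ)))
        = MvPolynomial.aeval (fun _ : Fin 2 => (Polynomial.X + Polynomial.C aa : Polynomial ℂ)) := by
      rw [MvPolynomial.comp_aeval]
      simp
    have h2 : (MvPolynomial.aeval (fun _ : Fin 2 => (Polynomial.X : Polynomial ℂ))).comp
        (MvPolynomial.aeval (fun v : Fin 2 => X v + MvPolynomial.C aa))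
        = MvPolynomial.aeval (fun _ : Fin 2 => (Polynomial.X + Polynomial.C aa : Polynomial ℂ)) := by
      rw [MvPolynomial.comp_aeval]
      congr 1
      funext v
      simp [MvPolynomial.algebraMap_eq]
    rw [← AlgHom.comp_apply, ← AlgHom.comp_apply, h1, h2]
  have hdvd' := keyA0 m β (ψ A) hx' hU'
  rw [← hdiag] at hdvd'
  obtain ⟨w, hw⟩ := hdvd'
  have := congrArg (Polynomial.aeval (Polynomial.X - Polynomial.C aa) : Polynomial ℂ →ₐ[ℂ] Polynomial ℂ) hw
  rw [map_mul, map_pow, Polynomial.aeval_X] at this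
  have hback : (Polynomial.aeval (Polynomial.X - Polynomial.C aa) : Polynomial ℂ →ₐ[ℂ] Polynomial ℂ)
      ((Polynomial.aeval (Polynomial.X + Polynomial.C aa) : Polynomial ℂ →ₐ[ℂ] Polynomial ℂ) (diag A))
      = diag A := by
    rw [← Polynomial.aeval_algHom_apply]
    simp
  rw [hback] at this
  exact ⟨_, this⟩

lemma rename_swap_numer {r : ℕ} (a : Fin r → ℂ) (b : Fin r → ℤ) :
    rename (Equiv.swap (0 : Fin 2) 1) (numerAt a b 0) = numerAt a b 1 := by
  rw [numerAt, map_prod]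
  apply Finset.prod_congr rfl
  intro j _
  rw [map_pow, map_sub, rename_X, MvPolynomial.rename_C, Equiv.swap_apply_left]

lemma rename_swap_denom {r : ℕ} (a : Fin r → ℂ) (b : Fin r → ℤ) :
    rename (Equiv.swap (0 : Fin 2) 1) (denomAt a b 0) = denomAt a b 1 := by
  rw [denomAt, map_prod]
  apply Finset.prod_congr rfl
  intro j _
  rw [map_pow, map_sub, rename_X, MvPolynomial.rename_C, Equiv.swap_apply_left]

lemma rename_swap_numer' {r : ℕ} (a : Fin r → ℂ) (b : Fin r → ℤ) :
    rename (Equiv.swap (0 : Fin 2) 1) (numerAt a b 1) = numerAt a b 0 := by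
  rw [numerAt, map_prod]
  apply Finset.prod_congr rfl
  intro j _
  rw [map_pow, map_sub, rename_X, MvPolynomial.rename_C, Equiv.swap_apply_right]

lemma rename_swap_denom' {r : ℕ} (a : Fin r → ℂ) (b : Fin r → ℤ) :
    rename (Equiv.swap (0 : Fin 2) 1) (denomAt a b 1) = denomAt a b 0 := by
  rw [denomAt, map_prod]
  apply Finset.prod_congr rfl
  intro j _
  rw [map_pow, map_sub, rename_X, MvPolynomial.rename_C, Equiv.swap_apply_right]

lemma rename_swap_swap (A : MvPolynomial (Fin 2) ℂ) :
    rename (Equiv.swap (0 : Fin 2) 1) (rename (Equiv.swap (0 : Fin 2) 1) A) = A := by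
  rw [MvPolynomial.rename_rename]
  have : (Equiv.swap (0 : Fin 2) 1) ∘ (Equiv.swap (0 : Fin 2) 1) = id := by
    funext v
    simp [Equiv.swap_apply_self]
  rw [this, MvPolynomial.rename_id, AlgHom.id_apply]

lemma diag_rename_swap (A : MvPolynomial (Fin 2) ℂ) :
    diag (rename (Equiv.swap (0 : Fin 2) 1) A) = diag A := by
  rw [diag, diag, MvPolynomial.aeval_rename]
  rfl

lemma diag_X_sub_C_pow (aa : ℂ) (v : Fin 2) (k : ℕ) :
    diag ((X v - MvPolynomial.C aa) ^ k) = (Polynomial.X - Polynomial.C aa) ^ k := by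
  rw [diag, map_pow, map_sub, MvPolynomial.aeval_X, MvPolynomial.aeval_C,
    Polynomial.algebraMap_eq]

/-- for `f = ∏ i (x − a_i)^{b_i}` with the `a_i` pairwise distinct, if
`F ∈ Q_m(f)` then `∏ i (x − a_i)^{d_m(b_i)}` divides `F(x,x)` in `ℂ[x]`,
where `d_m(b) = min(m, |b|)`. -/
theorem stmt11 (m : ℕ) (r : ℕ) (a : Fin r → ℂ) (b : Fin r → ℤ)
    (ha : Function.Injective a)
    (F : MvPolynomial (Fin 2) ℂ) (hF : MemQalg a b m F) :
    (∏ i : Fin r, (Polynomial.X - Polynomial.C (a i)) ^ (min m (b i).natAbs)) ∣ diag F := by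
  classical
  set s : Finset (Fin r) := Finset.univ.filter (fun j => b j ≠ 0) with hs
  set P : Polynomial ℂ := ∏ j ∈ s, (Polynomial.X - Polynomial.C (a j)) ^ (b j).natAbs with hP
  set A : MvPolynomial (Fin 2) ℂ := numerAt a b 0 * denomAt a b 1 * F with hA
  have hdiagN : diag (numerAt a b 0) =
      ∏ j ∈ Finset.univ.filter (fun j => 0 < b j),
        (Polynomial.X - Polynomial.C (a j)) ^ (b j).natAbs := by
    rw [numerAt, diag, map_prod]
    apply Finset.prod_congr rfl
    intro j hj
    rw [map_pow, map_sub, MvPolynomial.aeval_X, MvPolynomial.aeval_C, Polynomial.algebraMap_eq]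
    congr 1
    have := (Finset.mem_filter.1 hj).2
    omega
  have hdiagD : diag (denomAt a b 1) =
      ∏ j ∈ Finset.univ.filter (fun j => b j < 0),
        (Polynomial.X - Polynomial.C (a j)) ^ (b j).natAbs := by
    rw [denomAt, diag, map_prod]
    apply Finset.prod_congr rfl
    intro j hj
    rw [map_pow, map_sub, MvPolynomial.aeval_X, MvPolynomial.aeval_C, Polynomial.algebraMap_eq]
    congr 1
    have := (Finset.mem_filter.1 hj).2
    omega
  have hsplit : P = diag (numerAt a b 0) * diag (denomAt a b 1) := by
    rw [hdiagN, hdiagD, hP, ← Finset.prod_union]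
    · apply Finset.prod_congr
      · ext j
        simp only [Finset.mem_union, Finset.mem_filter, Finset.mem_univ, true_and, hs]
        omega
      · intros; rfl
    · rw [Finset.disjoint_filter]
      intro j _ h1
      omega
  have hdiagA : diag A = P * diag F := by
    rw [hA, diag]
    rw [map_mul, map_mul, hsplit]
    rfl
  have hswapA : rename (Equiv.swap (0 : Fin 2) 1) A
      = numerAt a b 1 * denomAt a b 0 * rename (Equiv.swap (0 : Fin 2) 1) F := by
    rw [hA, map_mul, map_mul, rename_swap_numer, rename_swap_denom']
  have hUA : (X 0 - X 1 : MvPolynomial (Fin 2) ℂ) ^ (2 * m + 1) ∣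
      A - rename (Equiv.swap (0 : Fin 2) 1) A := by
    rw [hswapA]
    exact hF
  -- per-index divisibility
  have hkey : ∀ i : Fin r,
      (Polynomial.X - Polynomial.C (a i)) ^ (min m (b i).natAbs) ∣ diag F := by
    intro i
    by_cases hd0 : min m (b i).natAbs = 0
    · rw [hd0, pow_zero]; exact one_dvd _
    have hbne : b i ≠ 0 := by
      intro h
      rw [h] at hd0
      simp at hd0
    set β := (b i).natAbs with hβ
    have his : i ∈ s := by simp [hs, hbne]
    -- step 1: (X - C a i)^(β + d) ∣ diag A
    have hstep : (Polynomial.X - Polynomial.C (a i)) ^ (β + min m β) ∣ diag A := by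
      rcases lt_or_ge 0 (b i) with hpos | hneg
      · have hxdvd : (X 0 - MvPolynomial.C (a i) : MvPolynomial (Fin 2) ℂ) ^ β ∣ A := by
          have h1 : (X 0 - MvPolynomial.C (a i) : MvPolynomial (Fin 2) ℂ) ^ ((b i).toNat)
              ∣ numerAt a b 0 :=
            Finset.dvd_prod_of_mem _ (by simp [hpos])
          have h2 : (b i).toNat = β := by omega
          rw [h2] at h1
          exact dvd_mul_of_dvd_left (dvd_mul_of_dvd_left h1 _) _
        exact keyA m β (a i) A hxdvd hUA
      · have hneg' : b i < 0 := by omega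
        have hxdvd : (X 0 - MvPolynomial.C (a i) : MvPolynomial (Fin 2) ℂ) ^ β ∣
            rename (Equiv.swap (0 : Fin 2) 1) A := by
          have h1 : (X 0 - MvPolynomial.C (a i) : MvPolynomial (Fin 2) ℂ) ^ ((-(b i)).toNat)
              ∣ denomAt a b 0 :=
            Finset.dvd_prod_of_mem _ (by simp [hneg'])
          have h2 : (-(b i)).toNat = β := by omega
          rw [h2] at h1
          rw [hswapA]
          exact dvd_mul_of_dvd_left (dvd_mul_of_dvd_right h1 _) _
        have hUA' : (X 0 - X 1 : MvPolynomial (Fin 2) ℂ) ^ (2 * m + 1) ∣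
            rename (Equiv.swap (0 : Fin 2) 1) A
              - rename (Equiv.swap (0 : Fin 2) 1) (rename (Equiv.swap (0 : Fin 2) 1) A) := by
          rw [rename_swap_swap]
          have e : rename (Equiv.swap (0 : Fin 2) 1) A - A
              = -(A - rename (Equiv.swap (0 : Fin 2) 1) A) := (neg_sub _ _).symm
          rw [e]
          exact dvd_neg.2 hUA
        have h3 := keyA m β (a i) (rename (Equiv.swap (0 : Fin 2) 1) A) hxdvd hUA'
        rw [diag_rename_swap] at h3
        exact h3
    -- step 2: cancel
    rw [hdiagA] at hstep
    have hPsplit : P = (Polynomial.X - Polynomial.C (a i)) ^ β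
        * ∏ j ∈ s.erase i, (Polynomial.X - Polynomial.C (a j)) ^ (b j).natAbs := by
      rw [hP, ← Finset.mul_prod_erase s _ his]
    set Q : Polynomial ℂ := ∏ j ∈ s.erase i, (Polynomial.X - Polynomial.C (a j)) ^ (b j).natAbs
      with hQ
    rw [hPsplit, pow_add, mul_assoc] at hstep
    have hne : ((Polynomial.X - Polynomial.C (a i)) ^ β : Polynomial ℂ) ≠ 0 :=
      pow_ne_zero _ (Polynomial.X_sub_C_ne_zero (a i))
    rw [mul_dvd_mul_iff_left hne] at hstep
    have hcop : IsCoprime ((Polynomial.X - Polynomial.C (a i)) ^ (min m β)) Q := by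
      apply IsCoprime.prod_right
      intro j hj
      have hij : i ≠ j := fun h => (Finset.mem_erase.1 hj).1 h.symm
      exact ((Polynomial.pairwise_coprime_X_sub_C ha hij).pow)
    exact hcop.dvd_of_dvd_mul_left hstep
  -- assemble
  exact Fintype.prod_dvd_of_coprime
    (fun i j hij => (Polynomial.pairwise_coprime_X_sub_C ha hij).pow) hkey
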